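/- arXiv:2404.13650 — 2 statements merged into one kernel-verified Lean document; each statement's English description precedes it below -/
import Mathlib

section
/- For real numbers m ∉ {0,1} and c ≠ 0, the mean curvature H of the surface x_{m,c}(r,θ) = (r cos θ, r sin θ, c r^m cos mθ), computed with respect to the unit normal n = (x_r × x_θ)/‖x_r × x_θ‖, is given at every point (r,θ) ∈ (0,∞) × ℝ by H = − c³ m³ (m−1) r^{3m−4} cos mθ / ( 2 (1 + c² m² r^{2m−2})^{3/2} ). -/
/-!
The surface is the polar graph of `h = c r^m cos mθ`. For any polar graph
`(r cos θ, r sin θ, h(r, θ))` one has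
`x_r × x_θ = (h_θ sin θ - r h_r cos θ, -r h_r sin θ - h_θ cos θ, r)`, whose squared length
`W = r² (1 + h_r²) + h_θ²` is also `EG - F²` (Lagrange's identity), so `H` is a polynomial
in `r` and the partial derivatives of `h`, divided by `2 W^{3/2}`. For our `h`,
`W = r² (1 + c²m²r^{2m-2})`, and once every power of `r` is written through `r^m`, the numerator
collapses by `sin² mθ + cos² mθ = 1` to `-c³m³(m-1) r^{3m-1} cos mθ`.
-/

noncomputable section

/-- Cross product on ℝ³ represented as `ℝ × ℝ × ℝ`. -/
def cross3 (u v : ℝ × ℝ × ℝ) : ℝ × ℝ × ℝ :=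
  (u.2.1 * v.2.2 - u.2.2 * v.2.1,
   u.2.2 * v.1 - u.1 * v.2.2,
   u.1 * v.2.1 - u.2.1 * v.1)

/-- Dot product on ℝ³. -/
def dot3 (u v : ℝ × ℝ × ℝ) : ℝ :=
  u.1 * v.1 + u.2.1 * v.2.1 + u.2.2 * v.2.2

/-- Euclidean norm on ℝ³. -/
def norm3 (u : ℝ × ℝ × ℝ) : ℝ := Real.sqrt (dot3 u u)

open Real

theorem rpow_natCast_mul_sub_natCast {r : ℝ} (hr : 0 < r) (k j : ℕ) (m : ℝ) :
    r ^ (k * m - j) = (r ^ m) ^ k / r ^ j := by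
  rw [rpow_sub hr, mul_comm, rpow_mul hr.le, rpow_natCast, rpow_natCast]

theorem dot3_smul_right (a : ℝ) (u v : ℝ × ℝ × ℝ) : dot3 u (a • v) = a * dot3 u v := by
  simp only [dot3, Prod.smul_fst, Prod.smul_snd, smul_eq_mul]
  ring

def meanCurvature (xu xv xuu xuv xvv : ℝ × ℝ × ℝ) : ℝ :=
  let n := (norm3 (cross3 xu xv))⁻¹ • cross3 xu xv
  let E := dot3 xu xu
  let F := dot3 xu xv
  let G := dot3 xv xv
  (dot3 xuu n * G - 2 * dot3 xuv n * F + dot3 xvv n * E) / (2 * (E * G - F ^ 2))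

theorem meanCurvature_polarGraph {r : ℝ} (hr : r ≠ 0) (θ h_r h_θ h_rr h_rθ h_θθ : ℝ) :
    meanCurvature (cos θ, sin θ, h_r) (-(r * sin θ), r * cos θ, h_θ) (0, 0, h_rr)
        (-sin θ, cos θ, h_rθ) (-(r * cos θ), -(r * sin θ), h_θθ) =
      (r * h_rr * (r ^ 2 + h_θ ^ 2) - 2 * (r * h_rθ - h_θ) * h_r * h_θ +
          (r ^ 2 * h_r + r * h_θθ) * (1 + h_r ^ 2)) /
        (2 * (r ^ 2 * (1 + h_r ^ 2) + h_θ ^ 2) ^ ((3 : ℝ) / 2)) := by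
  have hsc := sin_sq_add_cos_sq θ
  set W := r ^ 2 * (1 + h_r ^ 2) + h_θ ^ 2
  have hW : 0 < W := by positivity
  set N : ℝ × ℝ × ℝ :=
    (h_θ * sin θ - h_r * r * cos θ, -(h_r * r * sin θ) - h_θ * cos θ, r) with hN
  have hcross : cross3 (cos θ, sin θ, h_r) (-(r * sin θ), r * cos θ, h_θ) = N := by
    simp only [cross3, hN, Prod.mk.injEq]
    exact ⟨by ring, by ring, by linear_combination r * hsc⟩
  have hnorm : norm3 N = √W := by
    simp only [norm3, dot3, hN]
    congr 1
    linear_combination (h_r ^ 2 * r ^ 2 + h_θ ^ 2) * hsc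
  have hE : dot3 (cos θ, sin θ, h_r) (cos θ, sin θ, h_r) = 1 + h_r ^ 2 := by
    simp only [dot3]; linear_combination hsc
  have hF : dot3 (cos θ, sin θ, h_r) (-(r * sin θ), r * cos θ, h_θ) = h_r * h_θ := by
    simp only [dot3]; ring
  have hG : dot3 (-(r * sin θ), r * cos θ, h_θ) (-(r * sin θ), r * cos θ, h_θ) =
      r ^ 2 + h_θ ^ 2 := by
    simp only [dot3]; linear_combination r ^ 2 * hsc
  have he : dot3 (0, 0, h_rr) N = r * h_rr := by
    simp only [dot3, hN]; ring
  have hf : dot3 (-sin θ, cos θ, h_rθ) N = r * h_rθ - h_θ := by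
    simp only [dot3, hN]; linear_combination (-h_θ) * hsc
  have hg : dot3 (-(r * cos θ), -(r * sin θ), h_θθ) N = r ^ 2 * h_r + r * h_θθ := by
    simp only [dot3, hN]; linear_combination (h_r * r ^ 2) * hsc
  have hW32 : W ^ ((3 : ℝ) / 2) = W * √W := by
    rw [show (3 : ℝ) / 2 = 1 + 1 / 2 by norm_num, rpow_add hW, rpow_one, sqrt_eq_rpow]
  simp only [meanCurvature, hcross, hnorm, dot3_smul_right, hE, hF, hG, he, hf, hg, hW32]
  rw [show (1 + h_r ^ 2) * (r ^ 2 + h_θ ^ 2) - (h_r * h_θ) ^ 2 = W by ring]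
  field_simp

def polarPowerSurface (m c s t : ℝ) : ℝ × ℝ × ℝ :=
  (s * cos t, s * sin t, c * s ^ m * cos (m * t))

section polarPowerSurface

variable (m c : ℝ)

theorem hasDerivAt_polarPowerSurface_radial (t : ℝ) {s : ℝ} (hs : s ≠ 0) :
    HasDerivAt (fun s => polarPowerSurface m c s t)
      (cos t, sin t, c * m * s ^ (m - 1) * cos (m * t)) s := by
  have h : HasDerivAt (fun s => c * s ^ m * cos (m * t)) (c * m * s ^ (m - 1) * cos (m * t)) s :=
    (((hasDerivAt_rpow_const (Or.inl hs)).const_mul c).mul_const _).congr_deriv (by ring)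
  exact (hasDerivAt_mul_const (cos t)).prodMk ((hasDerivAt_mul_const (sin t)).prodMk h)

theorem hasDerivAt_polarPowerSurface_angular (s t : ℝ) :
    HasDerivAt (fun t => polarPowerSurface m c s t)
      (-(s * sin t), s * cos t, -(c * m * s ^ m * sin (m * t))) t := by
  have h : HasDerivAt (fun t => c * s ^ m * cos (m * t)) (-(c * m * s ^ m * sin (m * t))) t :=
    (((hasDerivAt_id' t).const_mul m).cos.const_mul _).congr_deriv (by ring)
  exact (((hasDerivAt_cos t).const_mul s).congr_deriv (mul_neg s _)).prodMk
    (((hasDerivAt_sin t).const_mul s).prodMk h)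

theorem deriv_deriv_polarPowerSurface_radial (t : ℝ) {r : ℝ} (hr : r ≠ 0) :
    deriv (fun s => deriv (fun s' => polarPowerSurface m c s' t) s) r =
      (0, 0, c * m * (m - 1) * r ^ (m - 2) * cos (m * t)) := by
  have hev : (fun s => deriv (fun s' => polarPowerSurface m c s' t) s) =ᶠ[nhds r]
      fun s => (cos t, sin t, c * m * s ^ (m - 1) * cos (m * t)) := by
    filter_upwards [isOpen_ne.mem_nhds hr] with s hs
    exact (hasDerivAt_polarPowerSurface_radial m c t hs).deriv
  have h : HasDerivAt (fun s => c * m * s ^ (m - 1) * cos (m * t))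
      (c * m * (m - 1) * r ^ (m - 2) * cos (m * t)) r :=
    (((hasDerivAt_rpow_const (Or.inl hr)).const_mul _).mul_const _).congr_deriv (by ring_nf)
  rw [hev.deriv_eq]
  exact ((hasDerivAt_const r _).prodMk ((hasDerivAt_const r _).prodMk h)).deriv

theorem deriv_deriv_polarPowerSurface_mixed {r : ℝ} (hr : r ≠ 0) (θ : ℝ) :
    deriv (fun t => deriv (fun s => polarPowerSurface m c s t) r) θ =
      (-sin θ, cos θ, -(c * m ^ 2 * r ^ (m - 1) * sin (m * θ))) := by
  have h : HasDerivAt (fun t => c * m * r ^ (m - 1) * cos (m * t))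
      (-(c * m ^ 2 * r ^ (m - 1) * sin (m * θ))) θ :=
    (((hasDerivAt_id' θ).const_mul m).cos.const_mul _).congr_deriv (by ring)
  simp_rw [(hasDerivAt_polarPowerSurface_radial m c _ hr).deriv]
  exact ((hasDerivAt_cos θ).prodMk ((hasDerivAt_sin θ).prodMk h)).deriv

theorem deriv_deriv_polarPowerSurface_angular (r θ : ℝ) :
    deriv (fun t => deriv (fun t' => polarPowerSurface m c r t') t) θ =
      (-(r * cos θ), -(r * sin θ), -(c * m ^ 2 * r ^ m * cos (m * θ))) := by
  have h : HasDerivAt (fun t => -(c * m * r ^ m * sin (m * t)))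
      (-(c * m ^ 2 * r ^ m * cos (m * θ))) θ :=
    (((hasDerivAt_id' θ).const_mul m).sin.const_mul _).neg.congr_deriv (by ring)
  simp_rw [(hasDerivAt_polarPowerSurface_angular m c r _).deriv]
  exact (((hasDerivAt_sin θ).const_mul r).neg.prodMk
    ((((hasDerivAt_cos θ).const_mul r).congr_deriv (mul_neg r _)).prodMk h)).deriv

theorem meanCurvature_polarPowerSurface {r : ℝ} (hr : 0 < r) (θ : ℝ) :
    meanCurvature (deriv (fun s => polarPowerSurface m c s θ) r)
        (deriv (fun t => polarPowerSurface m c r t) θ)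
        (deriv (fun s => deriv (fun s' => polarPowerSurface m c s' θ) s) r)
        (deriv (fun t => deriv (fun s => polarPowerSurface m c s t) r) θ)
        (deriv (fun t => deriv (fun t' => polarPowerSurface m c r t') t) θ) =
      -(c ^ 3 * m ^ 3 * (m - 1) * r ^ (3 * m - 4) * cos (m * θ)) /
        (2 * (1 + c ^ 2 * m ^ 2 * r ^ (2 * m - 2)) ^ ((3 : ℝ) / 2)) := by
  rw [(hasDerivAt_polarPowerSurface_radial m c θ hr.ne').deriv,
    (hasDerivAt_polarPowerSurface_angular m c r θ).deriv,
    deriv_deriv_polarPowerSurface_radial m c θ hr.ne',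
    deriv_deriv_polarPowerSurface_mixed m c hr.ne', deriv_deriv_polarPowerSurface_angular,
    meanCurvature_polarGraph hr.ne']
  have h1 : r ^ (m - 1) = r ^ m / r := rpow_sub_one hr.ne' m
  have h2 : r ^ (m - 2) = r ^ m / r ^ 2 := by rw [rpow_sub hr, rpow_two]
  have h3 : r ^ (2 * m - 2) = (r ^ m) ^ 2 / r ^ 2 := by
    exact_mod_cast rpow_natCast_mul_sub_natCast hr 2 2 m
  have h4 : r ^ (3 * m - 4) = (r ^ m) ^ 3 / r ^ 4 := by
    exact_mod_cast rpow_natCast_mul_sub_natCast hr 3 4 m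
  have hmθ := sin_sq_add_cos_sq (m * θ)
  have hQ : 0 < 1 + c ^ 2 * m ^ 2 * r ^ (2 * m - 2) := by positivity
  have hW : r ^ 2 * (1 + (c * m * r ^ (m - 1) * cos (m * θ)) ^ 2) +
      (-(c * m * r ^ m * sin (m * θ))) ^ 2 = r ^ 2 * (1 + c ^ 2 * m ^ 2 * r ^ (2 * m - 2)) := by
    rw [h1, h3]; field_simp; linear_combination (c ^ 2 * m ^ 2 * (r ^ m) ^ 2) * hmθ
  have hr3 : (r ^ 2) ^ ((3 : ℝ) / 2) = r ^ 3 := by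
    rw [← rpow_natCast, ← rpow_mul hr.le]; norm_num
  rw [hW, mul_rpow (by positivity) hQ.le, hr3, h1, h2, h4]
  field_simp
  linear_combination (-(c ^ 3 * m ^ 3 * (m - 1) * (r ^ m) ^ 2 * cos (m * θ))) * hmθ

end polarPowerSurface

theorem stmt_4_general (m c : ℝ) :
    ∀ r θ : ℝ, 0 < r →
      let x : ℝ → ℝ → ℝ × ℝ × ℝ :=
        fun s t => (s * Real.cos t, s * Real.sin t, c * s ^ m * Real.cos (m * t))
      let xr := deriv (fun s' => x s' θ) r
      let xθ := deriv (fun t' => x r t') θ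
      let xrr := deriv (fun s' => deriv (fun s'' => x s'' θ) s') r
      let xrθ := deriv (fun t' => deriv (fun s' => x s' t') r) θ
      let xθθ := deriv (fun t' => deriv (fun t'' => x r t'') t') θ
      let n := (norm3 (cross3 xr xθ))⁻¹ • cross3 xr xθ
      let E := dot3 xr xr
      let Ft := dot3 xr xθ
      let G := dot3 xθ xθ
      let e := dot3 xrr n
      let f := dot3 xrθ n
      let g := dot3 xθθ n
      let H := (e * G - 2 * f * Ft + g * E) / (2 * (E * G - Ft ^ 2))
      H = -(c ^ 3 * m ^ 3 * (m - 1) * r ^ (3 * m - 4) * Real.cos (m * θ)) /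
        (2 * (1 + c ^ 2 * m ^ 2 * r ^ (2 * m - 2)) ^ ((3 : ℝ) / 2)) :=
  fun _ θ hr => meanCurvature_polarPowerSurface m c hr θ

/-- For `m ∉ {0,1}` and `c ≠ 0`, the mean curvature of
`x_{m,c}(r,θ) = (r cos θ, r sin θ, c r^m cos mθ)` with respect to
`n = (x_r × x_θ)/‖x_r × x_θ‖` is
`H = − c³ m³ (m−1) r^{3m−4} cos mθ / (2 (1 + c² m² r^{2m−2})^{3/2})`. -/
theorem stmt_4 (m c : ℝ) (hm0 : m ≠ 0) (hm1 : m ≠ 1) (hc : c ≠ 0) :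
    ∀ r θ : ℝ, 0 < r →
      let x : ℝ → ℝ → ℝ × ℝ × ℝ :=
        fun s t => (s * Real.cos t, s * Real.sin t, c * s ^ m * Real.cos (m * t))
      let xr := deriv (fun s' => x s' θ) r
      let xθ := deriv (fun t' => x r t') θ
      let xrr := deriv (fun s' => deriv (fun s'' => x s'' θ) s') r
      let xrθ := deriv (fun t' => deriv (fun s' => x s' t') r) θ
      let xθθ := deriv (fun t' => deriv (fun t'' => x r t'') t') θ
      let n := (norm3 (cross3 xr xθ))⁻¹ • cross3 xr xθ
      let E := dot3 xr xr
      let Ft := dot3 xr xθ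
      let G := dot3 xθ xθ
      let e := dot3 xrr n
      let f := dot3 xrθ n
      let g := dot3 xθθ n
      let H := (e * G - 2 * f * Ft + g * E) / (2 * (E * G - Ft ^ 2))
      H = -(c ^ 3 * m ^ 3 * (m - 1) * r ^ (3 * m - 4) * Real.cos (m * θ)) /
        (2 * (1 + c ^ 2 * m ^ 2 * r ^ (2 * m - 2)) ^ ((3 : ℝ) / 2)) :=
  stmt_4_general m c
end
end

section
/- For nonzero real numbers k and c, the unit normal n = ((p_{k,c})_x × (p_{k,c})_y)/‖(p_{k,c})_x × (p_{k,c})_y‖ of the surface p_{k,c}(x,y) = (x, y, c e^{kx} cos ky) is quasi-rotationally equivariant: for all (x,y) ∈ ℝ² and all α ∈ ℝ one has n(x, y + α) = R_{−kα}( n(x,y) ), where R_φ is the rotation of ℝ³ about the z-axis by angle φ. -/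
noncomputable section

/-- Rotation of ℝ³ about the z-axis by angle `φ`. -/
def Rz (φ : ℝ) (v : ℝ × ℝ × ℝ) : ℝ × ℝ × ℝ :=
  (v.1 * Real.cos φ - v.2.1 * Real.sin φ,
   v.1 * Real.sin φ + v.2.1 * Real.cos φ, v.2.2)

/-!
With `m = c k e^{kx}` the partial derivatives of `p` are `(1, 0, m cos ky)` and
`(0, 1, -m sin ky)`, so their cross product is `(-m cos ky, m sin ky, 1)`. Replacing `y` by
`y + α` turns its horizontal part by `-kα` about the z-axis and leaves its length unchanged,
and rotations commute with scaling by the reciprocal of that length.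
-/

open Real

lemma dot3_Rz_self (φ : ℝ) (v : ℝ × ℝ × ℝ) : dot3 (Rz φ v) (Rz φ v) = dot3 v v := by
  simp only [dot3, Rz]
  linear_combination (v.1 ^ 2 + v.2.1 ^ 2) * sin_sq_add_cos_sq φ

lemma norm3_Rz (φ : ℝ) (v : ℝ × ℝ × ℝ) : norm3 (Rz φ v) = norm3 v := by
  rw [norm3, norm3, dot3_Rz_self]

lemma Rz_smul (φ r : ℝ) (v : ℝ × ℝ × ℝ) : Rz φ (r • v) = r • Rz φ v := by
  simp only [Rz, Prod.smul_mk, Prod.smul_fst, Prod.smul_snd, smul_eq_mul]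
  refine Prod.ext (by ring) (Prod.ext (by ring) rfl)

lemma cross3_graph_tangents (a b : ℝ) : cross3 (1, 0, a) (0, 1, b) = (-a, -b, 1) := by
  simp [cross3]

lemma hasDerivAt_graph_fst {f : ℝ → ℝ} {f' s : ℝ} (t : ℝ) (hf : HasDerivAt f f' s) :
    HasDerivAt (fun s' => (s', t, f s')) ((1 : ℝ), (0 : ℝ), f') s :=
  (hasDerivAt_id s).prodMk ((hasDerivAt_const s t).prodMk hf)

lemma hasDerivAt_graph_snd {g : ℝ → ℝ} {g' t : ℝ} (s : ℝ) (hg : HasDerivAt g g' t) :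
    HasDerivAt (fun t' => (s, t', g t')) ((0 : ℝ), (1 : ℝ), g') t :=
  (hasDerivAt_const t s).prodMk ((hasDerivAt_id t).prodMk hg)

def rotatingNormal (m θ : ℝ) : ℝ × ℝ × ℝ := (-(m * cos θ), m * sin θ, 1)

lemma rotatingNormal_add (m θ φ : ℝ) :
    rotatingNormal m (θ + φ) = Rz (-φ) (rotatingNormal m θ) := by
  simp only [rotatingNormal, Rz, cos_add, sin_add, cos_neg, sin_neg]
  refine Prod.ext (by ring) (Prod.ext (by ring) rfl)

lemma cross3_deriv_expCos (k c s t : ℝ) :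
    cross3 (deriv (fun s' => (s', t, c * exp (k * s') * cos (k * t))) s)
        (deriv (fun t' => (s, t', c * exp (k * s) * cos (k * t'))) t)
      = rotatingNormal (c * exp (k * s) * k) (k * t) := by
  have hs : HasDerivAt (fun s' => c * exp (k * s') * cos (k * t))
      (c * exp (k * s) * k * cos (k * t)) s := by
    refine ((((hasDerivAt_id s).const_mul k).exp.const_mul c).mul_const _).congr_deriv ?_
    simp only [id_eq]
    ring
  have ht : HasDerivAt (fun t' => c * exp (k * s) * cos (k * t'))
      (-(c * exp (k * s) * k * sin (k * t))) t := by
    refine (((hasDerivAt_id t).const_mul k).cos.const_mul _).congr_deriv ?_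
    simp only [id_eq]
    ring
  rw [(hasDerivAt_graph_fst t hs).deriv, (hasDerivAt_graph_snd s ht).deriv, cross3_graph_tangents,
    rotatingNormal, neg_neg]

theorem stmt_15_general (k c : ℝ) :
    let p : ℝ → ℝ → ℝ × ℝ × ℝ :=
      fun s t => (s, t, c * Real.exp (k * s) * Real.cos (k * t))
    let n : ℝ → ℝ → ℝ × ℝ × ℝ := fun s t =>
      let px := deriv (fun s' => p s' t) s
      let py := deriv (fun t' => p s t') t
      (norm3 (cross3 px py))⁻¹ • cross3 px py
    ∀ x y α : ℝ, n x (y + α) = Rz (-(k * α)) (n x y) := by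
  intro p n x y α
  change (norm3 (cross3 _ _))⁻¹ • cross3 _ _ = Rz (-(k * α)) ((norm3 (cross3 _ _))⁻¹ • cross3 _ _)
  rw [cross3_deriv_expCos, cross3_deriv_expCos, mul_add, rotatingNormal_add, norm3_Rz, Rz_smul]

/-- For nonzero `k, c`, the unit normal of `p_{k,c}(x,y) = (x, y, c e^{kx} cos ky)` is
quasi-rotationally equivariant: `n(x, y + α) = R_{−kα}(n(x,y))` for all `(x,y)` and `α`. -/
theorem stmt_15 (k c : ℝ) (hk : k ≠ 0) (hc : c ≠ 0) :
    let p : ℝ → ℝ → ℝ × ℝ × ℝ :=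
      fun s t => (s, t, c * Real.exp (k * s) * Real.cos (k * t))
    let n : ℝ → ℝ → ℝ × ℝ × ℝ := fun s t =>
      let px := deriv (fun s' => p s' t) s
      let py := deriv (fun t' => p s t') t
      (norm3 (cross3 px py))⁻¹ • cross3 px py
    ∀ x y α : ℝ, n x (y + α) = Rz (-(k * α)) (n x y) :=
  stmt_15_general k c
end
end
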